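/- arXiv:2102.07936 — 2 statements merged into one kernel-verified Lean document; each statement's English description precedes it below -/
import Mathlib

section
/- Let K ≥ 1, let U_1, …, U_K be finite nonempty action sets, let Q_k : U_k → ℝ for each k, and let M : ℝ^K → ℝ be monotonically nondecreasing in each coordinate (for each k, x ↦ M(…, x, …) is monotone nondecreasing when the other coordinates are fixed). Define Q_jt(u) := M(Q_1(u_1), …, Q_K(u_K)). If for each k the action u_k* maximizes Q_k over U_k, then the joint action (u_1*, …, u_K*) maximizes Q_jt over U_1 × ⋯ × U_K. (Monotonicity of the mixing function is a sufficient condition for the greedy individual actions to achieve the global maximum.) -/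
open Function

theorem monotone_of_monotone_update {ι : Type*} [Finite ι] [DecidableEq ι] {α : ι → Type*}
    [∀ i, Preorder (α i)] {β : Type*} [Preorder β] {f : (∀ i, α i) → β}
    (hf : ∀ i x, Monotone fun y => f (update x i y)) : Monotone f := by
  cases nonempty_fintype ι
  intro x y hxy
  -- Raise the coordinates of `x` to those of `y` one at a time; each step can only increase `f`.
  have raise_on : ∀ s : Finset ι, f x ≤ f (s.piecewise y x) := by
    intro s
    induction s using Finset.induction with
    | empty => simp
    | @insert k s hk ih =>
      have hxk : s.piecewise y x k ≤ y k := by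
        rw [Finset.piecewise_eq_of_notMem _ _ _ hk]
        exact hxy k
      calc f x ≤ f (s.piecewise y x) := ih
        _ = f (update (s.piecewise y x) k (s.piecewise y x k)) := by rw [update_eq_self]
        _ ≤ f (update (s.piecewise y x) k (y k)) := hf k _ hxk
        _ = f ((insert k s).piecewise y x) := by rw [Finset.piecewise_insert]
  simpa using raise_on Finset.univ

theorem monotonicity_greedy_joint_max_general {K : ℕ} (U : Fin K → Type*)
    (Q : ∀ k, U k → ℝ)
    (M : (Fin K → ℝ) → ℝ)
    (hM : ∀ (k : Fin K) (x : Fin K → ℝ),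
      Monotone (fun y : ℝ => M (Function.update x k y)))
    (Qjt : (∀ k, U k) → ℝ)
    (hQjt : ∀ u, Qjt u = M (fun k => Q k (u k)))
    (uStar : ∀ k, U k)
    (hStar : ∀ k : Fin K, ∀ v : U k, Q k v ≤ Q k (uStar k)) :
    ∀ u : ∀ k, U k, Qjt u ≤ Qjt uStar := by
  intro u
  rw [hQjt, hQjt]
  exact monotone_of_monotone_update hM fun k => hStar k (u k)

/-- **Monotonicity suffices for greedy individual actions to achieve the global maximum
(QMIX).** If the mixing function `M` is monotonically nondecreasing in each coordinate
and each `uStar k` maximizes `Q k`, then `uStar` maximizes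
`Q_jt u = M (fun k => Q k (u k))`. -/
theorem monotonicity_greedy_joint_max {K : ℕ} (hK : 1 ≤ K) (U : Fin K → Type*)
    [∀ k, Fintype (U k)] [∀ k, Nonempty (U k)]
    (Q : ∀ k, U k → ℝ)
    (M : (Fin K → ℝ) → ℝ)
    (hM : ∀ (k : Fin K) (x : Fin K → ℝ),
      Monotone (fun y : ℝ => M (Function.update x k y)))
    (Qjt : (∀ k, U k) → ℝ)
    (hQjt : ∀ u, Qjt u = M (fun k => Q k (u k)))
    (uStar : ∀ k, U k)
    (hStar : ∀ k : Fin K, ∀ v : U k, Q k v ≤ Q k (uStar k)) :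
    ∀ u : ∀ k, U k, Qjt u ≤ Qjt uStar :=
  monotonicity_greedy_joint_max_general U Q M hM Qjt hQjt uStar hStar
end

section
/- Let K ≥ 1, let μ_1, …, μ_K be probability measures on ℝ with quantile functions f_1, …, f_K, and let β_1, …, β_K be nonnegative real numbers. Then there exists a probability measure ν on ℝ whose quantile function agrees on (0,1) with the quantile mixture ω ↦ Σ_{k=1}^K β_k f_k(ω). (A nonnegatively weighted sum of quantile functions is itself the quantile function of a probability distribution, i.e., the nonnegativity condition on the model parameters makes the quantile mixture a valid quantile function.) -/
/-!
The quantile function of a probability measure is nondecreasing and left-continuous on `(0, 1)`,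
and conversely every such function `g` is the quantile function of the image of the uniform
measure on `(0, 1)` under `g`: by monotonicity and left-continuity, `{t ∈ (0, 1) | g t ≤ x}` is
an initial segment of `(0, 1)` which contains `(0, ω)` when `g ω ≤ x` and lies in some
`(0, ω')` with `ω' < ω` when `x < g ω`. Both properties are preserved by nonnegative linear
combinations.
-/

open MeasureTheory

/-- The cumulative distribution function of a measure on `ℝ`: `F_μ(x) = μ (-∞, x]`. -/
noncomputable def cdfOf (μ : Measure ℝ) (x : ℝ) : ℝ :=
  (μ (Set.Iic x)).toReal

/-- The quantile function (generalized inverse CDF) of a measure on `ℝ`: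
`f_μ(ω) = inf {x | ω ≤ F_μ(x)}`. -/
noncomputable def quantile (μ : Measure ℝ) (ω : ℝ) : ℝ :=
  sInf {x : ℝ | ω ≤ cdfOf μ x}

open ProbabilityTheory Filter Set

section Quantile

variable {μ : Measure ℝ} [IsProbabilityMeasure μ] {ω x : ℝ}

lemma cdfOf_eq_cdf : cdfOf μ = cdf μ := by
  funext x
  rw [cdfOf, cdf_eq_real, Measure.real]

lemma monotone_cdfOf : Monotone (cdfOf μ) := by
  rw [cdfOf_eq_cdf]
  exact monotone_cdf μ

lemma nonempty_setOf_le_cdfOf (hω : ω < 1) : {x | ω ≤ cdfOf μ x}.Nonempty := by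
  rw [cdfOf_eq_cdf]
  exact ((tendsto_cdf_atTop μ).eventually (eventually_ge_nhds hω)).exists

lemma bddBelow_setOf_le_cdfOf (hω : 0 < ω) : BddBelow {x | ω ≤ cdfOf μ x} := by
  rw [cdfOf_eq_cdf]
  obtain ⟨x₀, hx₀⟩ :=
    eventually_atBot.mp ((tendsto_cdf_atBot μ).eventually (eventually_lt_nhds hω))
  refine ⟨x₀, fun x hx => ?_⟩
  by_contra! hlt
  exact not_le.mpr (hx₀ x hlt.le) hx

lemma le_cdfOf_quantile (hω : ω ∈ Ioo 0 1) : ω ≤ cdfOf μ (quantile μ ω) := by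
  have h_right : ∀ y ∈ Ioi (quantile μ ω), ω ≤ cdf μ y := fun y hy => by
    obtain ⟨s, hs, hsy⟩ := exists_lt_of_csInf_lt (nonempty_setOf_le_cdfOf hω.2) hy
    rw [mem_ofPred_eq, cdfOf_eq_cdf] at hs
    exact hs.trans (monotone_cdf μ hsy.le)
  rw [cdfOf_eq_cdf]
  exact ge_of_tendsto (((cdf μ).right_continuous _).mono Ioi_subset_Ici_self)
    (eventually_nhdsWithin_of_forall h_right)

lemma quantile_le_iff (hω : ω ∈ Ioo 0 1) : quantile μ ω ≤ x ↔ ω ≤ cdfOf μ x :=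
  ⟨fun h => (le_cdfOf_quantile hω).trans (monotone_cdfOf h),
    fun h => csInf_le (bddBelow_setOf_le_cdfOf hω.1) h⟩

lemma lt_quantile_iff (hω : ω ∈ Ioo 0 1) : x < quantile μ ω ↔ cdfOf μ x < ω := by
  simpa only [not_le] using (quantile_le_iff (μ := μ) (x := x) hω).not

lemma monotoneOn_quantile : MonotoneOn (quantile μ) (Ioo 0 1) := fun _ ha _ hb hab =>
  csInf_le_csInf (bddBelow_setOf_le_cdfOf ha.1) (nonempty_setOf_le_cdfOf hb.2)
    fun _ hx => hab.trans hx

lemma continuousWithinAt_Iio_quantile (hω : ω ∈ Ioo 0 1) :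
    ContinuousWithinAt (quantile μ) (Iio ω) ω := by
  refine tendsto_order.2 ⟨fun y hy => ?_, fun y hy => ?_⟩
  · rw [lt_quantile_iff hω] at hy
    filter_upwards [Ioo_mem_nhdsLT (max_lt hy hω.1)] with t ht
    exact (lt_quantile_iff ⟨(le_max_right _ _).trans_lt ht.1, ht.2.trans hω.2⟩).2
      ((le_max_left _ _).trans_lt ht.1)
  · filter_upwards [Ioo_mem_nhdsLT hω.1] with t ht
    exact (monotoneOn_quantile ⟨ht.1, ht.2.trans hω.2⟩ hω ht.2.le).trans_lt hy

end Quantile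

section Pushforward

variable {g : ℝ → ℝ}

lemma cdfOf_map_restrict_Ioo (hg : MonotoneOn g (Ioo 0 1)) (x : ℝ) :
    cdfOf ((volume.restrict (Ioo (0 : ℝ) 1)).map g) x =
      volume.real (g ⁻¹' Iic x ∩ Ioo 0 1) := by
  rw [cdfOf, Measure.map_apply_of_aemeasurable
    (aemeasurable_restrict_of_monotoneOn measurableSet_Ioo hg) measurableSet_Iic,
    Measure.restrict_apply' measurableSet_Ioo]
  rfl

lemma quantile_map_restrict_Ioo (hg : MonotoneOn g (Ioo 0 1))
    (hg_left : ∀ ω ∈ Ioo (0 : ℝ) 1, ContinuousWithinAt g (Iio ω) ω) {ω : ℝ}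
    (hω : ω ∈ Ioo (0 : ℝ) 1) :
    quantile ((volume.restrict (Ioo (0 : ℝ) 1)).map g) ω = g ω := by
  refine IsLeast.csInf_eq ⟨?_, fun x hx => ?_⟩
  · have hsub : Ioo 0 ω ⊆ g ⁻¹' Iic (g ω) ∩ Ioo 0 1 := fun t ht =>
      ⟨hg ⟨ht.1, ht.2.trans hω.2⟩ hω ht.2.le, ht.1, ht.2.trans hω.2⟩
    rw [mem_ofPred_eq, cdfOf_map_restrict_Ioo hg]
    calc ω = volume.real (Ioo 0 ω) := by rw [Real.volume_real_Ioo_of_le hω.1.le, sub_zero]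
      _ ≤ _ := measureReal_mono hsub
        (measure_inter_lt_top_of_right_ne_top measure_Ioo_lt_top.ne).ne
  · by_contra! hxω
    obtain ⟨ω', ⟨hω'0, hω'ω⟩, hxω'⟩ : ∃ ω' ∈ Ioo 0 ω, x < g ω' :=
      (Eventually.and (Ioo_mem_nhdsLT hω.1)
        ((hg_left ω hω).eventually (lt_mem_nhds hxω))).exists
    have hsub : g ⁻¹' Iic x ∩ Ioo 0 1 ⊆ Ioo 0 ω' := fun t ⟨htx, ht⟩ =>
      ⟨ht.1, lt_of_not_ge fun h =>
        ((hg ⟨hω'0, hω'ω.trans hω.2⟩ ht h).trans htx).not_gt hxω'⟩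
    rw [mem_ofPred_eq, cdfOf_map_restrict_Ioo hg] at hx
    have := hx.trans (measureReal_mono hsub measure_Ioo_lt_top.ne)
    rw [Real.volume_real_Ioo_of_le hω'0.le, sub_zero] at this
    linarith

end Pushforward

theorem quantile_mixture_is_quantile_function_general {K : ℕ}
    (μ : Fin K → Measure ℝ) [∀ k, IsProbabilityMeasure (μ k)]
    (β : Fin K → ℝ) (hβ : ∀ k, 0 ≤ β k) :
    ∃ ν : Measure ℝ, IsProbabilityMeasure ν ∧
      ∀ ω ∈ Set.Ioo (0 : ℝ) 1,
        quantile ν ω = ∑ k : Fin K, β k * quantile (μ k) ω := by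
  set g : ℝ → ℝ := fun ω => ∑ k : Fin K, β k * quantile (μ k) ω
  have hg_mono : MonotoneOn g (Ioo 0 1) := fun _ ha _ hb hab =>
    Finset.sum_le_sum fun k _ => mul_le_mul_of_nonneg_left (monotoneOn_quantile ha hb hab) (hβ k)
  have hg_left : ∀ ω ∈ Ioo (0 : ℝ) 1, ContinuousWithinAt g (Iio ω) ω := fun _ hω =>
    tendsto_finsetSum _ fun k _ => (continuousWithinAt_Iio_quantile hω).const_mul (β k)
  have : IsProbabilityMeasure (volume.restrict (Ioo (0 : ℝ) 1)) := ⟨by simp⟩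
  exact ⟨_, Measure.isProbabilityMeasure_map
    (aemeasurable_restrict_of_monotoneOn measurableSet_Ioo hg_mono),
    fun ω hω => quantile_map_restrict_Ioo hg_mono hg_left hω⟩

/-- **A quantile mixture with nonnegative weights is a valid quantile function.** Given
probability measures `μ k` and nonnegative reals `β k`, there exists a probability
measure `ν` whose quantile function agrees on `(0, 1)` with
`ω ↦ ∑ k, β k * quantile (μ k) ω`. -/
theorem quantile_mixture_is_quantile_function {K : ℕ} (hK : 1 ≤ K)
    (μ : Fin K → Measure ℝ) [∀ k, IsProbabilityMeasure (μ k)]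
    (β : Fin K → ℝ) (hβ : ∀ k, 0 ≤ β k) :
    ∃ ν : Measure ℝ, IsProbabilityMeasure ν ∧
      ∀ ω ∈ Set.Ioo (0 : ℝ) 1,
        quantile ν ω = ∑ k : Fin K, β k * quantile (μ k) ω :=
  quantile_mixture_is_quantile_function_general μ β hβ
end
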